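/- Let $Q\in\mathcal{P}$ be a martingale measure for the positive price processes $(X^i_t)_{t\in I}$ and suppose that every strictly positive $g\in \bigcap_i L_1(Q_i)\cap L_1(Q)$ satisfying $E_Q[g\,X_T^i\mid \mathcal{F}_t] = X_t^i E_Q[g\mid\mathcal{F}_t]$ for all $i\le d$ and $t\in I$ is $Q$-a.s. constant. Then $Q$ is the unique equivalent martingale measure: $\mathcal{P}=\{Q\}$. -/

import Mathlib

/-!
If `Q'` is another equivalent martingale measure, its density `g = dQ'/dQ` is strictly positive,
lies in every `L₁(Qᵢ)`, and Bayes' formula for conditional expectations under a change of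
measure turns the `Q'`-martingale property of `Xⁱ` into
`E_Q[g X_Tⁱ | 𝓕 t] = X_tⁱ E_Q[g | 𝓕 t]`. Conditional completeness then forces `g` to be
constant, and since `E_Q[g] = 1` that constant is `1`, i.e. `Q' = Q`.
-/

open MeasureTheory

namespace MeasureTheory

variable {Ω : Type*} {m : MeasurableSpace Ω}

theorem integrable_withDensity_ofReal_of_integrable_mul {μ : Measure Ω} {f g : Ω → ℝ}
    (hf : Measurable f) (hg : AEStronglyMeasurable g μ)
    (hgf : Integrable (fun ω => g ω * f ω) μ) :
    Integrable g (μ.withDensity fun ω => ENNReal.ofReal (f ω)) := by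
  rw [integrable_withDensity_iff hf.ennreal_ofReal (ae_of_all _ fun _ => ENNReal.ofReal_lt_top)]
  refine hgf.mono (hg.mul hf.ennreal_ofReal.ennreal_toReal.aestronglyMeasurable)
    (ae_of_all _ fun ω => ?_)
  simp only [norm_mul, ENNReal.toReal_ofReal', Real.norm_eq_abs]
  exact mul_le_mul_of_nonneg_left (abs_max_le_max_abs_abs.trans (by simp)) (abs_nonneg _)

section ChangeOfMeasure

variable {μ ν : Measure Ω} [IsFiniteMeasure μ] [IsFiniteMeasure ν]

theorem ae_toReal_rnDeriv_pos (hνμ : ν ≪ μ) : ∀ᵐ ω ∂ν, 0 < (μ.rnDeriv ν ω).toReal := by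
  filter_upwards [Measure.rnDeriv_pos' hνμ, Measure.rnDeriv_lt_top μ ν] with ω hpos hlt
  exact ENNReal.toReal_pos hpos.ne' hlt.ne

/-- The abstract Bayes formula, applied to a `μ`-martingale. -/
theorem condExp_toReal_rnDeriv_mul_of_martingale {ι : Type*} [Preorder ι] {𝓕 : Filtration ι m}
    (hμν : μ ≪ ν) {Y : ι → Ω → ℝ} (hY : Martingale Y 𝓕 μ) {s t : ι} (hst : s ≤ t) :
    ν[fun ω => (μ.rnDeriv ν ω).toReal * Y t ω | 𝓕 s]
      =ᵐ[ν] fun ω => Y s ω * ν[fun ω => (μ.rnDeriv ν ω).toReal | 𝓕 s] ω := by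
  set g : Ω → ℝ := fun ω => (μ.rnDeriv ν ω).toReal
  have hint : ∀ r, Integrable (fun ω => g ω * Y r ω) ν := fun r =>
    (integrable_toReal_rnDeriv_mul_iff hμν).mpr (hY.integrable r)
  -- on `A ∈ 𝓕 s`, `∫_A g Y_r dν = ∫_A Y_r dμ`, which does not depend on `r ≥ s`
  have hshift : ν[fun ω => g ω * Y s ω | 𝓕 s] =ᵐ[ν] ν[fun ω => g ω * Y t ω | 𝓕 s] := by
    refine ae_eq_condExp_of_forall_setIntegral_eq (𝓕.le s) (hint t)
      (fun _ _ _ => integrable_condExp.integrableOn) (fun A hA _ => ?_)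
      stronglyMeasurable_condExp.aestronglyMeasurable
    rw [setIntegral_condExp (𝓕.le s) (hint s) hA,
      setIntegral_toReal_rnDeriv_mul hμν (𝓕.le s A hA),
      setIntegral_toReal_rnDeriv_mul hμν (𝓕.le s A hA), hY.setIntegral_eq hst hA]
  have hpull : ν[g * Y s | 𝓕 s] =ᵐ[ν] ν[g | 𝓕 s] * Y s :=
    condExp_mul_of_stronglyMeasurable_right (hY.stronglyAdapted s) (hint s)
      Measure.integrable_toReal_rnDeriv
  filter_upwards [hshift, hpull] with ω hshiftω hpullω
  rw [← hshiftω]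
  exact hpullω.trans (mul_comm _ _)

end ChangeOfMeasure

theorem eq_of_toReal_rnDeriv_ae_eq_const {μ ν : Measure Ω} [IsProbabilityMeasure μ]
    [IsProbabilityMeasure ν] (hμν : μ ≪ ν) {c : ℝ}
    (hc : (fun ω => (μ.rnDeriv ν ω).toReal) =ᵐ[ν] fun _ => c) : μ = ν := by
  have hc_one : c = 1 := by
    have := Measure.integral_toReal_rnDeriv hμν
    rw [integral_congr_ae hc] at this
    simpa using this
  refine (Measure.rnDeriv_eq_one_iff_eq hμν).mp ?_
  filter_upwards [hc, Measure.rnDeriv_lt_top μ ν] with ω hω hlt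
  exact (ENNReal.toReal_eq_one_iff _).mp (hω.trans hc_one)

end MeasureTheory

theorem stmt_14_general {Ω : Type*} {m : MeasurableSpace Ω}
    (Q : Measure Ω) [IsProbabilityMeasure Q]
    (I : Set ℝ) (T : ℝ) (hT : T ∈ I) (hTtop : ∀ t ∈ I, t ≤ T)
    (𝓕 : Filtration I m)
    (d : ℕ) (X : Fin d → I → Ω → ℝ)
    (hQmart : ∀ i, Martingale (X i) 𝓕 Q)
    (x₀ : Fin d → ℝ)
    (Qi : Fin d → Measure Ω)
    (hQi : ∀ i, Qi i
      = Q.withDensity (fun ω => ENNReal.ofReal (X i ⟨T, hT⟩ ω / x₀ i)))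
    (𝓟 : Set (Measure Ω))
    (h𝓟 : 𝓟 = {Q' : Measure Ω | IsProbabilityMeasure Q' ∧ Q' ≪ Q ∧ Q ≪ Q' ∧
      ∀ i, Martingale (X i) 𝓕 Q'})
    (hcomplete : ∀ g : Ω → ℝ, Measurable g → (∀ᵐ ω ∂Q, 0 < g ω) →
      (∀ i, Integrable g (Qi i)) → Integrable g Q →
      (∀ i (t : I),
        (Q[fun ω => g ω * X i ⟨T, hT⟩ ω | 𝓕 t])
          =ᵐ[Q] fun ω => X i t ω * (Q[g | 𝓕 t]) ω) →
      ∃ c : ℝ, g =ᵐ[Q] fun _ => c) :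
    𝓟 = {Q} := by
  subst h𝓟
  ext Q'
  refine ⟨fun ⟨_, hQ'Q, hQQ', hQ'mart⟩ => ?_, fun hQ' => ?_⟩
  · have hbayes (i : Fin d) (t : I) := condExp_toReal_rnDeriv_mul_of_martingale hQ'Q
      (hQ'mart i) (show t ≤ ⟨T, hT⟩ from hTtop t t.2)
    have hQi_int (i : Fin d) : Integrable (fun ω => (Q'.rnDeriv Q ω).toReal) (Qi i) := by
      have hXT : Measurable (X i ⟨T, hT⟩) :=
        (((hQmart i).stronglyAdapted _).mono (𝓕.le _)).measurable
      rw [hQi i]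
      refine integrable_withDensity_ofReal_of_integrable_mul (hXT.div_const _)
        (Measure.measurable_rnDeriv Q' Q).ennreal_toReal.aestronglyMeasurable ?_
      simpa only [mul_div_assoc'] using
        (((integrable_toReal_rnDeriv_mul_iff hQ'Q).mpr ((hQ'mart i).integrable _)).div_const _)
    obtain ⟨c, hc⟩ := hcomplete _ (Measure.measurable_rnDeriv Q' Q).ennreal_toReal
      (ae_toReal_rnDeriv_pos hQQ') hQi_int Measure.integrable_toReal_rnDeriv hbayes
    exact eq_of_toReal_rnDeriv_ae_eq_const hQ'Q hc
  · rw [Set.mem_singleton_iff.mp hQ']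
    exact ⟨inferInstance, .rfl, .rfl, hQmart⟩

/-- Conditional completeness implies uniqueness of the equivalent martingale
measure: if every strictly positive `g ∈ ⋂ᵢ L₁(Qᵢ) ∩ L₁(Q)` satisfying
`E_Q[g X_Tⁱ | 𝓕 t] = X_tⁱ E_Q[g | 𝓕 t]` for all `i ≤ d`, `t ∈ I` is `Q`-a.s.
constant, then `𝓟 = {Q}`. -/
theorem stmt_14 {Ω : Type*} {m : MeasurableSpace Ω}
    (Q : Measure Ω) [IsProbabilityMeasure Q]
    (I : Set ℝ) (h0I : (0 : ℝ) ∈ I) (T : ℝ) (hT : T ∈ I) (hTtop : ∀ t ∈ I, t ≤ T)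
    (𝓕 : Filtration I m)
    (d : ℕ) (X : Fin d → I → Ω → ℝ)
    (hadapted : ∀ i, Adapted 𝓕 (X i))
    (hpos : ∀ i (t : I), ∀ ω, 0 < X i t ω)
    (hintQ : ∀ i (t : I), Integrable (X i t) Q)
    (hQmart : ∀ i, Martingale (X i) 𝓕 Q)
    (x₀ : Fin d → ℝ) (hx₀ : ∀ i, 0 < x₀ i)
    (hX0 : ∀ i, X i ⟨0, h0I⟩ = fun _ => x₀ i)
    (Qi : Fin d → Measure Ω)
    (hQi : ∀ i, Qi i
      = Q.withDensity (fun ω => ENNReal.ofReal (X i ⟨T, hT⟩ ω / x₀ i)))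
    (𝓟 : Set (Measure Ω))
    (h𝓟 : 𝓟 = {Q' : Measure Ω | IsProbabilityMeasure Q' ∧ Q' ≪ Q ∧ Q ≪ Q' ∧
      ∀ i, Martingale (X i) 𝓕 Q'})
    (hcomplete : ∀ g : Ω → ℝ, Measurable g → (∀ᵐ ω ∂Q, 0 < g ω) →
      (∀ i, Integrable g (Qi i)) → Integrable g Q →
      (∀ i (t : I),
        (Q[fun ω => g ω * X i ⟨T, hT⟩ ω | 𝓕 t])
          =ᵐ[Q] fun ω => X i t ω * (Q[g | 𝓕 t]) ω) →
      ∃ c : ℝ, g =ᵐ[Q] fun _ => c) :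
    𝓟 = {Q} :=
  stmt_14_general Q I T hT hTtop 𝓕 d X hQmart x₀ Qi hQi 𝓟 h𝓟 hcomplete
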